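/- The quadratic polynomial 8T² − 4√5·T + 3 − √5 has two distinct real roots, and neither of them equals 1/√(6+2√5) or −1/√(6+2√5). Consequently, the polynomial P₅(T) = −((2+√5)/4)·(4T − 1 + √5)·(8T² − 4√5·T + 3 − √5), which is the zeta polynomial of ψ₅(x,y) = x⁵ − (50+20√5)x³y² + (225+100√5)xy⁴ with respect to q = 6+2√5, has a root α with |α| ≠ 1/√(6+2√5); that is, the extremal invariant polynomial ψ₅ does not satisfy the Riemann hypothesis. -/

import Mathlib

/-!
Since `6 + 2√5 = (1 + √5)²`, the circle `|T| = 1/√q` is `T² = (3 - √5)/8`. On it the quadratic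
factor of `P₅` becomes linear, `2√5 T = 3 - √5`; squaring and comparing with `T² = (3 - √5)/8`
forces `7√5 = 13`, which is absurd. So no root of the quadratic factor lies on the circle, and its
discriminant `16 (2√5 - 1)` is positive, so it has two distinct real roots.
-/

noncomputable section

/-- `P₅` as a real polynomial. -/
def P5 : Polynomial ℝ :=
  -(Polynomial.C ((2 + Real.sqrt 5) / 4)) *
    (Polynomial.C 4 * Polynomial.X - Polynomial.C 1 + Polynomial.C (Real.sqrt 5)) *
    (Polynomial.C 8 * Polynomial.X ^ 2 - Polynomial.C (4 * Real.sqrt 5) * Polynomial.X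
      + Polynomial.C 3 - Polynomial.C (Real.sqrt 5))

theorem exists_ne_quadratic_eq_zero {K : Type*} [Field K] [NeZero (2 : K)] {a b c s : K}
    (ha : a ≠ 0) (h : discrim a b c = s * s) (hs : s ≠ 0) :
    ∃ x y, x ≠ y ∧ a * (x * x) + b * x + c = 0 ∧ a * (y * y) + b * y + c = 0 := by
  refine ⟨(-b + s) / (2 * a), (-b - s) / (2 * a), ?_, ?_, ?_⟩
  · intro hxy
    have hnum := (div_left_inj' (mul_ne_zero two_ne_zero ha)).mp hxy
    have h2s : (2 : K) * s = 0 := by linear_combination hnum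
    exact hs ((mul_eq_zero.mp h2s).resolve_left two_ne_zero)
  · simp [quadratic_eq_zero_iff ha h]
  · simp [quadratic_eq_zero_iff ha h]

open Real

theorem one_div_sqrt_six_add_two_sqrt_five_sq : (1 / √(6 + 2 * √5)) ^ 2 = (3 - √5) / 8 := by
  have h5 : √5 ^ 2 = 5 := sq_sqrt (by norm_num)
  rw [div_pow, one_pow, sq_sqrt (by positivity)]
  field_simp
  linear_combination 2 * h5

theorem sq_ne_of_quadratic_eq_zero {t : ℝ} (ht : 8 * t ^ 2 - 4 * √5 * t + 3 - √5 = 0) :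
    t ^ 2 ≠ (3 - √5) / 8 := by
  intro hsq
  have h5 : √5 ^ 2 = 5 := sq_sqrt (by norm_num)
  have hlin : 2 * √5 * t = 3 - √5 := by linear_combination (-ht + 8 * hsq) / 2
  have hsq' : 20 * t ^ 2 = (3 - √5) ^ 2 := by rw [← hlin]; linear_combination -4 * t ^ 2 * h5
  have : √5 = 13 / 7 := by linear_combination (hsq' + h5 - 20 * hsq) * 2 / 7
  norm_num [this] at h5

theorem abs_ne_of_quadratic_eq_zero {t : ℝ} (ht : 8 * t ^ 2 - 4 * √5 * t + 3 - √5 = 0) :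
    |t| ≠ 1 / √(6 + 2 * √5) := fun habs =>
  sq_ne_of_quadratic_eq_zero ht <| by
    rw [← sq_abs, habs, one_div_sqrt_six_add_two_sqrt_five_sq]

theorem P5_isRoot_of_quadratic_eq_zero {t : ℝ} (ht : 8 * t ^ 2 - 4 * √5 * t + 3 - √5 = 0) :
    P5.IsRoot t := by
  simp only [P5, Polynomial.IsRoot, Polynomial.eval_mul, Polynomial.eval_neg, Polynomial.eval_add,
    Polynomial.eval_sub, Polynomial.eval_C, Polynomial.eval_X, Polynomial.eval_pow]
  linear_combination -((2 + √5) / 4) * (4 * t - 1 + √5) * ht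

theorem exists_ne_quadratic_roots : ∃ r s : ℝ, r ≠ s ∧
    8 * r ^ 2 - 4 * √5 * r + 3 - √5 = 0 ∧ 8 * s ^ 2 - 4 * √5 * s + 3 - √5 = 0 := by
  have h5 : √5 ^ 2 = 5 := sq_sqrt (by norm_num)
  have hdisc : 0 < discrim 8 (-4 * √5) (3 - √5) := by
    rw [discrim]
    nlinarith [sqrt_nonneg 5]
  obtain ⟨r, s, hrs, hr, hs⟩ := exists_ne_quadratic_eq_zero (by norm_num)
    (mul_self_sqrt hdisc.le).symm (sqrt_ne_zero'.mpr hdisc)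
  exact ⟨r, s, hrs, by linear_combination hr, by linear_combination hs⟩

theorem psi5_no_RH :
    (∃ r s : ℝ, r ≠ s ∧
      8 * r ^ 2 - 4 * Real.sqrt 5 * r + 3 - Real.sqrt 5 = 0 ∧
      8 * s ^ 2 - 4 * Real.sqrt 5 * s + 3 - Real.sqrt 5 = 0 ∧
      r ≠ 1 / Real.sqrt (6 + 2 * Real.sqrt 5) ∧ r ≠ -(1 / Real.sqrt (6 + 2 * Real.sqrt 5)) ∧
      s ≠ 1 / Real.sqrt (6 + 2 * Real.sqrt 5) ∧ s ≠ -(1 / Real.sqrt (6 + 2 * Real.sqrt 5))) ∧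
    ∃ z : ℂ, (P5.map (algebraMap ℝ ℂ)).IsRoot z ∧
      ‖z‖ ≠ 1 / Real.sqrt (6 + 2 * Real.sqrt 5) := by
  obtain ⟨r, s, hrs, hr, hs⟩ := exists_ne_quadratic_roots
  have hq : 0 ≤ 1 / √(6 + 2 * √5) := by positivity
  have hr' := not_or.mp ((abs_eq hq).not.mp (abs_ne_of_quadratic_eq_zero hr))
  have hs' := not_or.mp ((abs_eq hq).not.mp (abs_ne_of_quadratic_eq_zero hs))
  refine ⟨⟨r, s, hrs, hr, hs, hr'.1, hr'.2, hs'.1, hs'.2⟩, algebraMap ℝ ℂ r,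
    (P5_isRoot_of_quadratic_eq_zero hr).map, ?_⟩
  rw [Complex.coe_algebraMap, Complex.norm_real, norm_eq_abs]
  exact abs_ne_of_quadratic_eq_zero hr

end
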